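/- Let m ≥ 1, let θ = (θ_1, …, θ_m) ∈ ℝ^m, and let δ ∈ (0, 1). Suppose that for every positive integer k there exists an index i such that θ_i is irrational and Int.fract(k·θ_i) ∈ [0, δ]. Then there exists a nonzero integer vector a ∈ ℤ^m, supported on the set of indices i for which θ_i is irrational (i.e., a_i = 0 whenever θ_i ∈ ℚ), such that a_1·θ_1 + … + a_m·θ_m ∈ ℤ. -/

import Mathlib

/-!
If no resonance relation is supported on the irrational coordinates, these are nonresonant, and
Kronecker's theorem yields `k ≥ 1` with every `kθ_i` within `(1 - δ)/2` of `(1 + δ)/2` modulo 1,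
hence outside `[0, δ]`.

Kronecker's theorem is proved with a Fejér-type kernel. For nonresonant `θ` and integer frequency
vectors `φ t`, `t ∈ T`, the Cesàro means over `k` of `|∑_t e(φ t · (kθ + c))|²` tend to the number
of pairs `(t, t')` with `φ t = φ t'`: every other pair contributes a nontrivial character
`k ↦ e(k β)`, whose Cesàro means vanish. Take `T = [0, M)^(ι × Fin s)` with `s = |ι|` and
`φ t i = ∑_j t (i, j)`; at `y = kθ + c` the sum is `∏_i D_M(y_i)^s` for the Dirichlet kernel
`D_M(y) = ∑_{n<M} e(n y)`. If for every `k` some `y_i` lies at distance `≥ ρ` from `ℤ`, that factor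
is at most `1 / (2ρ)`, so the limit is at most `(2ρ)^(-2s) M^(2s(s-1))`. By Cauchy–Schwarz it is
at least `M^(2s²) / (sM)^s`, which is larger once `M > s / (2ρ)²`.
-/

open Finset Filter Topology Real FourierTransform

theorem norm_geom_sum_le_of_ne_one {z : ℂ} (hz : ‖z‖ ≤ 1) (hz1 : z ≠ 1) (n : ℕ) :
    ‖∑ k ∈ range n, z ^ k‖ ≤ 2 / ‖z - 1‖ := by
  rw [geom_sum_eq hz1, norm_div]
  gcongr
  calc ‖z ^ n - 1‖ ≤ ‖z ^ n‖ + ‖(1 : ℂ)‖ := norm_sub_le _ _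
    _ ≤ 2 := by rw [norm_pow, norm_one]; linarith [pow_le_one₀ (norm_nonneg z) hz (n := n)]

theorem tendsto_cesaro_geom {z : ℂ} (hz : ‖z‖ ≤ 1) :
    Tendsto (fun N : ℕ ↦ (N : ℂ)⁻¹ * ∑ k ∈ range N, z ^ k) atTop
      (𝓝 (if z = 1 then 1 else 0)) := by
  split_ifs with hz1
  · refine tendsto_const_nhds.congr' ?_
    filter_upwards [eventually_ne_atTop 0] with N hN
    simp [hz1, hN]
  · refine squeeze_zero_norm (fun N ↦ ?_)
      (by simpa using tendsto_inv_atTop_nhds_zero_nat.mul_const (2 / ‖z - 1‖))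
    rw [norm_mul, norm_inv, Complex.norm_natCast]
    exact mul_le_mul_of_nonneg_left (norm_geom_sum_le_of_ne_one hz hz1 N) (by positivity)

theorem le_of_tendsto_cesaro {a : ℕ → ℝ} {L B : ℝ}
    (h : Tendsto (fun N : ℕ ↦ (N : ℝ)⁻¹ * ∑ k ∈ range N, a k) atTop (𝓝 L)) (ha : ∀ k, a k ≤ B) :
    L ≤ B := by
  refine le_of_tendsto h ?_
  filter_upwards [eventually_gt_atTop 0] with N hN
  rw [inv_mul_le_iff₀ (by positivity)]
  simpa using sum_le_sum fun k (_ : k ∈ range N) ↦ ha k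

theorem card_sq_le_card_mul_card_filter_eq {α β : Type*} [DecidableEq β]
    {T : Finset α} {V : Finset β} {φ : α → β} (hφ : ∀ t ∈ T, φ t ∈ V) :
    #T ^ 2 ≤ #V * #{x ∈ T ×ˢ T | φ x.1 = φ x.2} := by
  have hfiber : #{x ∈ T ×ˢ T | φ x.1 = φ x.2} = ∑ v ∈ V, #{t ∈ T | φ t = v} ^ 2 := by
    rw [card_eq_sum_card_fiberwise (f := fun x ↦ φ x.1) (t := V)]
    · refine sum_congr rfl fun v _ ↦ ?_
      rw [sq, ← card_product]
      congr 1
      ext x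
      simp only [mem_filter, mem_product]
      constructor
      · rintro ⟨⟨⟨h₁, h₂⟩, h₃⟩, h₄⟩
        exact ⟨⟨h₁, h₄⟩, h₂, h₃ ▸ h₄⟩
      · rintro ⟨⟨h₁, h₄⟩, h₂, h₃⟩
        exact ⟨⟨⟨h₁, h₂⟩, h₄.trans h₃.symm⟩, h₄⟩
    · intro x hx
      exact hφ _ (mem_product.1 (mem_filter.1 hx).1).1
  rw [hfiber, card_eq_sum_card_fiberwise hφ]
  exact sq_sum_le_card_mul_sum_sq

theorem fourierChar_eq_one_iff {x : ℝ} : 𝐞 x = 1 ↔ ∃ n : ℤ, x = n := by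
  rw [fourierChar_apply', Circle.exp_eq_one]
  refine exists_congr fun n ↦ ?_
  constructor <;> intro h
  · nlinarith [pi_pos]
  · rw [h]; ring

theorem fourierChar_sum {α : Type*} (s : Finset α) (f : α → ℝ) :
    (𝐞 (∑ a ∈ s, f a) : ℂ) = ∏ a ∈ s, (𝐞 (f a) : ℂ) := by
  simp only [fourierChar_apply, ← Complex.exp_sum, mul_sum, sum_mul, Complex.ofReal_sum]

theorem norm_fourierChar_sub_one (x : ℝ) : ‖(𝐞 x : ℂ) - 1‖ = 2 * |sin (π * x)| := by
  rw [fourierChar_apply, mul_comm, Complex.norm_exp_I_mul_ofReal_sub_one, norm_mul,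
    Real.norm_eq_abs, Real.norm_eq_abs, abs_two]
  ring_nf

theorem four_mul_le_norm_fourierChar_sub_one {x ρ : ℝ} (h₁ : ρ ≤ Int.fract x)
    (h₂ : Int.fract x ≤ 1 - ρ) : 4 * ρ ≤ ‖(𝐞 x : ℂ) - 1‖ := by
  have hf₀ := Int.fract_nonneg x
  have hf₁ := Int.fract_lt_one x
  have hsin : |sin (π * x)| = sin (π * Int.fract x) := by
    rw [← Int.floor_add_fract x, mul_add, sin_add, mul_comm π, sin_int_mul_pi, zero_mul,
      zero_add, abs_mul, abs_cos_int_mul_pi, one_mul, Int.floor_add_fract,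
      abs_of_nonneg (sin_nonneg_of_nonneg_of_le_pi (by positivity) (by nlinarith [pi_pos]))]
  rw [norm_fourierChar_sub_one, hsin]
  -- Jordan's inequality `2 t ≤ sin (π t)` on `[0, 1/2]`, applied at `t` or at `1 - t`.
  rcases le_total (Int.fract x) (1 / 2) with h | h
  · have := mul_le_sin (x := π * Int.fract x) (by positivity) (by nlinarith [pi_pos])
    field_simp at this
    nlinarith [pi_pos]
  · have := mul_le_sin (x := π * (1 - Int.fract x)) (by nlinarith [pi_pos]) (by nlinarith [pi_pos])
    rw [mul_one_sub, sin_pi_sub] at this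
    field_simp at this
    nlinarith [pi_pos]

theorem norm_sum_range_fourierChar_le (n : ℕ) (x : ℝ) :
    ‖∑ k ∈ range n, (𝐞 (k * x) : ℂ)‖ ≤ n := by
  simpa [Circle.norm_coe] using norm_sum_le (range n) fun k ↦ (𝐞 (k * x) : ℂ)

theorem norm_sum_range_fourierChar_le_of_fract_mem_Icc {x ρ : ℝ} (hρ : 0 < ρ)
    (hx : Int.fract x ∈ Set.Icc ρ (1 - ρ)) (n : ℕ) :
    ‖∑ k ∈ range n, (𝐞 (k * x) : ℂ)‖ ≤ 1 / (2 * ρ) := by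
  have hlow := four_mul_le_norm_fourierChar_sub_one hx.1 hx.2
  have hne : (𝐞 x : ℂ) ≠ 1 := fun h ↦ by simp [h] at hlow; linarith
  simp_rw [← nsmul_eq_mul, AddChar.map_nsmul_eq_pow, Circle.coe_pow]
  calc _ ≤ 2 / ‖(𝐞 x : ℂ) - 1‖ := norm_geom_sum_le_of_ne_one (Circle.norm_coe _).le hne n
    _ ≤ 2 / (4 * ρ) := by gcongr
    _ = 1 / (2 * ρ) := by field_simp; norm_num

theorem sq_norm_sum_fourierChar {α : Type*} (T : Finset α) (ψ : α → ℝ) :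
    ((‖∑ t ∈ T, (𝐞 (ψ t) : ℂ)‖ ^ 2 : ℝ) : ℂ) = ∑ x ∈ T ×ˢ T, (𝐞 (ψ x.1 - ψ x.2) : ℂ) := by
  push_cast
  rw [← Complex.mul_conj', map_sum, sum_mul_sum, sum_product]
  simp [sub_eq_add_neg, AddChar.map_add_eq_mul]

section Kronecker

variable {ι α : Type*} [Fintype ι]

/-- No resonance relation: `1, θ₁, …, θₘ` are linearly independent over `ℚ`. -/
def Nonresonant (θ : ι → ℝ) : Prop :=
  ∀ a : ι → ℤ, (∃ z : ℤ, ∑ i, (a i : ℝ) * θ i = z) → a = 0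

theorem nonresonant_subtype {θ : ι → ℝ} {p : ι → Prop} [DecidablePred p]
    (h : ∀ a : ι → ℤ, (∀ i, ¬p i → a i = 0) → (∃ z : ℤ, ∑ i, (a i : ℝ) * θ i = z) → a = 0) :
    Nonresonant fun i : Subtype p ↦ θ i := by
  rintro a ⟨z, hz⟩
  let b (i : ι) : ℤ := if hi : p i then a ⟨i, hi⟩ else 0
  have hb : ∑ i, (b i : ℝ) * θ i = ∑ i, (a i : ℝ) * θ i := by
    simp only [b, apply_dite, Int.cast_zero, dite_mul, zero_mul]
    rw [sum_dite, sum_const_zero, add_zero]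
    exact sum_bij (fun i _ ↦ ⟨i.1, (mem_filter.1 i.2).2⟩) (by simp) (by simp) (by simp) (by simp)
  have hb0 := h b (fun i hi ↦ dif_neg hi) ⟨z, hb.trans hz⟩
  funext i
  simpa [b, i.2] using congrFun hb0 i

def rowSum {p : ℕ} (t : ι × Fin p → ℕ) (i : ι) : ℤ := ∑ j, (t (i, j) : ℤ)

theorem sum_piFinset_fourierChar_eq_prod_pow [DecidableEq ι] (M p : ℕ) (y : ι → ℝ) :
    ∑ t ∈ Fintype.piFinset (fun _ : ι × Fin p ↦ range M),
      (𝐞 (∑ i, (rowSum t i : ℝ) * y i) : ℂ) = ∏ i, (∑ k ∈ range M, (𝐞 (k * y i) : ℂ)) ^ p := by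
  have hsum (t : ι × Fin p → ℕ) : ∑ i, (rowSum t i : ℝ) * y i = ∑ x, (t x : ℝ) * y x.1 := by
    rw [Fintype.sum_prod_type]
    simp only [rowSum, Int.cast_sum, Int.cast_natCast, sum_mul]
  simp_rw [← Fin.prod_const, ← Fintype.prod_prod_type' (f := fun i (_ : Fin p) ↦
    ∑ k ∈ range M, (𝐞 (k * y i) : ℂ)), prod_univ_sum, hsum, fourierChar_sum]

theorem norm_prod_pow_sum_range_fourierChar_le (M p : ℕ) {y : ι → ℝ} {ρ : ℝ}
    (hρ : 0 < ρ) {i₀ : ι} (hi₀ : Int.fract (y i₀) ∈ Set.Icc ρ (1 - ρ)) :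
    ‖∏ i, (∑ k ∈ range M, (𝐞 (k * y i) : ℂ)) ^ p‖ ≤
      (1 / (2 * ρ)) ^ p * ((M : ℝ) ^ p) ^ (Fintype.card ι - 1) := by
  classical
  rw [norm_prod, ← mul_prod_erase univ _ (mem_univ i₀), ← card_univ,
    ← card_erase_of_mem (mem_univ i₀), ← prod_const]
  simp_rw [norm_pow]
  gcongr with i
  · exact norm_sum_range_fourierChar_le_of_fract_mem_Icc hρ hi₀ M
  · exact norm_sum_range_fourierChar_le M (y i)

theorem sq_pow_le_mul_card_filter_rowSum_eq [DecidableEq ι] {M p : ℕ} (hp : 0 < p) :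
    (M ^ (Fintype.card ι * p)) ^ 2 ≤ (p * M) ^ Fintype.card ι *
      #{x ∈ Fintype.piFinset (fun _ : ι × Fin p ↦ range M) ×ˢ
        Fintype.piFinset (fun _ : ι × Fin p ↦ range M) | rowSum x.1 = rowSum x.2} := by
  have hrowSum : ∀ t ∈ Fintype.piFinset (fun _ : ι × Fin p ↦ range M),
      rowSum t ∈ Fintype.piFinset fun _ : ι ↦ Ico (0 : ℤ) (p * M) := by
    intro t ht
    refine Fintype.mem_piFinset.2 fun i ↦ mem_Ico.2 ⟨sum_nonneg fun _ _ ↦ by positivity, ?_⟩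
    calc rowSum t i < ∑ _j : Fin p, (M : ℤ) :=
          sum_lt_sum_of_nonempty (univ_nonempty_iff.2 ⟨⟨0, hp⟩⟩) fun j _ ↦
            by exact_mod_cast mem_range.1 (Fintype.mem_piFinset.1 ht (i, j))
      _ = p * M := by simp
  convert card_sq_le_card_mul_card_filter_eq hrowSum using 2
  · simp
  · simp only [Fintype.card_piFinset, Int.card_Ico, sub_zero, prod_const, card_univ]
    rw [← Nat.cast_mul, Int.toNat_natCast]

theorem Nonresonant.tendsto_cesaro_sq_norm_sum_fourierChar {θ : ι → ℝ} (hθ : Nonresonant θ)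
    (T : Finset α) (φ : α → ι → ℤ) (c : ι → ℝ) :
    Tendsto (fun N : ℕ ↦ (N : ℝ)⁻¹ * ∑ k ∈ range N,
      ‖∑ t ∈ T, (𝐞 (∑ i, (φ t i : ℝ) * (k * θ i + c i)) : ℂ)‖ ^ 2) atTop
      (𝓝 #{x ∈ T ×ˢ T | φ x.1 = φ x.2}) := by
  let β (x : α × α) : ℝ := ∑ i, ((φ x.1 i - φ x.2 i : ℤ) : ℝ) * θ i
  let γ (x : α × α) : ℝ := ∑ i, ((φ x.1 i - φ x.2 i : ℤ) : ℝ) * c i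
  have hdiff (k : ℕ) (x : α × α) : ∑ i, (φ x.1 i : ℝ) * (k * θ i + c i) -
      ∑ i, (φ x.2 i : ℝ) * (k * θ i + c i) = k • β x + γ x := by
    simp only [β, γ, nsmul_eq_mul, mul_sum, ← sum_sub_distrib, ← sum_add_distrib]
    refine sum_congr rfl fun i _ ↦ ?_
    push_cast
    ring
  have hlimit (x : α × α) :
      (𝐞 (γ x) : ℂ) * (if (𝐞 (β x) : ℂ) = 1 then 1 else 0) = if φ x.1 = φ x.2 then 1 else 0 := by
    by_cases hx : φ x.1 = φ x.2
    · simp [β, γ, hx]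
    · have hβ : (𝐞 (β x) : ℂ) ≠ 1 := by
        rw [Ne, Circle.coe_eq_one, fourierChar_eq_one_iff]
        rintro ⟨z, hz⟩
        exact hx (sub_eq_zero.1 (hθ _ ⟨z, hz⟩))
      simp [hx, hβ]
  have hmean (N : ℕ) : (((N : ℝ)⁻¹ * ∑ k ∈ range N,
      ‖∑ t ∈ T, (𝐞 (∑ i, (φ t i : ℝ) * (k * θ i + c i)) : ℂ)‖ ^ 2 : ℝ) : ℂ) =
      ∑ x ∈ T ×ˢ T, (𝐞 (γ x) : ℂ) * ((N : ℂ)⁻¹ * ∑ k ∈ range N, (𝐞 (β x) : ℂ) ^ k) := by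
    rw [Complex.ofReal_mul, Complex.ofReal_sum]
    simp_rw [sq_norm_sum_fourierChar, hdiff, AddChar.map_add_eq_mul, AddChar.map_nsmul_eq_pow,
      Circle.coe_mul, Circle.coe_pow]
    rw [sum_comm, mul_sum]
    refine sum_congr rfl fun x _ ↦ ?_
    simp_rw [mul_comm _ (𝐞 (γ x) : ℂ), ← mul_sum]
    push_cast
    ring
  rw [← tendsto_ofReal_iff]
  simp_rw [hmean]
  have := tendsto_finsetSum (T ×ˢ T) fun x _ ↦
    (tendsto_cesaro_geom (Circle.norm_coe (𝐞 (β x))).le).const_mul (𝐞 (γ x) : ℂ)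
  simpa [hlimit] using this

theorem Nonresonant.card_filter_rowSum_eq_le [DecidableEq ι] {θ : ι → ℝ} (hθ : Nonresonant θ)
    {c : ι → ℝ} {ρ : ℝ} (hρ : 0 < ρ)
    (h : ∀ k : ℕ, 1 ≤ k → ∃ i, Int.fract (k * θ i - c i) ∈ Set.Icc ρ (1 - ρ)) (M p : ℕ) :
    (#{x ∈ Fintype.piFinset (fun _ : ι × Fin p ↦ range M) ×ˢ
        Fintype.piFinset (fun _ : ι × Fin p ↦ range M) | rowSum x.1 = rowSum x.2} : ℝ) ≤
      ((1 / (2 * ρ)) ^ p * ((M : ℝ) ^ p) ^ (Fintype.card ι - 1)) ^ 2 := by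
  -- Shifting `c` by `θ` makes the `k`-th term of the Cesàro mean look at `k + 1 ≥ 1`.
  refine le_of_tendsto_cesaro
    (hθ.tendsto_cesaro_sq_norm_sum_fourierChar _ rowSum (θ - c)) fun k ↦ ?_
  obtain ⟨i, hi⟩ := h (k + 1) (by omega)
  rw [sum_piFinset_fourierChar_eq_prod_pow]
  refine pow_le_pow_left₀ (norm_nonneg _)
    (norm_prod_pow_sum_range_fourierChar_le M p hρ (i₀ := i) ?_) 2
  convert hi using 2
  simp only [Pi.sub_apply]
  push_cast
  ring

theorem Nonresonant.exists_forall_fract_sub_notMem_Icc {θ : ι → ℝ} (hθ : Nonresonant θ)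
    (c : ι → ℝ) {ρ : ℝ} (hρ : 0 < ρ) :
    ∃ k : ℕ, 1 ≤ k ∧ ∀ i, Int.fract (k * θ i - c i) ∉ Set.Icc ρ (1 - ρ) := by
  classical
  by_contra! h
  obtain ⟨i₀, -⟩ := h 1 le_rfl
  set s := Fintype.card ι
  have hs : 0 < s := Fintype.card_pos_iff.2 ⟨i₀⟩
  obtain ⟨M, hM⟩ := exists_nat_gt (s / (2 * ρ) ^ 2)
  have hupper := hθ.card_filter_rowSum_eq_le hρ h M s
  have hlower := sq_pow_le_mul_card_filter_rowSum_eq (ι := ι) (M := M) hs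
  rw [pow_mul] at hlower
  replace hlower := (Nat.cast_le (α := ℝ)).2 hlower
  push_cast at hlower
  set q : ℝ := (M : ℝ) ^ s
  set w : ℝ := s / (2 * ρ) ^ 2
  have hq₀ : 0 < q := pow_pos ((show (0 : ℝ) < w by positivity).trans hM) s
  have hcompare : (q * q) * (q ^ (s - 1)) ^ 2 ≤ (w ^ s * q) * (q ^ (s - 1)) ^ 2 := by
    calc _ = (q ^ s) ^ 2 := by rw [← pow_sub_one_mul hs.ne' q]; ring
      _ ≤ (s * M) ^ s * ((1 / (2 * ρ)) ^ s * q ^ (s - 1)) ^ 2 := hlower.trans (by gcongr)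
      _ = _ := by
          simp only [w, q]
          rw [div_pow (s : ℝ), ← pow_mul (2 * ρ) 2 s, mul_comm 2 s, pow_mul, one_div_pow]
          ring
  have hqw : q ≤ w ^ s :=
    le_of_mul_le_mul_right (le_of_mul_le_mul_right hcompare (by positivity)) hq₀
  exact hqw.not_gt (pow_lt_pow_left₀ hM (by positivity) hs.ne')

end Kronecker

theorem stmt_15_general (m : ℕ) (θ : Fin m → ℝ) (δ : ℝ) (hδ1 : δ < 1)
    (h : ∀ k : ℕ, 1 ≤ k →
      ∃ i : Fin m, Irrational (θ i) ∧ Int.fract ((k : ℝ) * θ i) ∈ Set.Icc 0 δ) :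
    ∃ a : Fin m → ℤ, a ≠ 0 ∧ (∀ i, ¬Irrational (θ i) → a i = 0) ∧
      ∃ z : ℤ, ∑ i, (a i : ℝ) * θ i = z := by
  classical
  by_contra! hcon
  have hθ : Nonresonant fun i : {i // Irrational (θ i)} ↦ θ i :=
    nonresonant_subtype fun a ha ⟨z, hz⟩ ↦ by_contra fun ha₀ ↦ hcon a ha₀ ha z hz
  obtain ⟨k, hk, hkθ⟩ := hθ.exists_forall_fract_sub_notMem_Icc (fun _ ↦ (1 + δ) / 2)
    (ρ := (1 - δ) / 2) (by linarith)
  obtain ⟨i, hi, hf₀, hfδ⟩ := h k hk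
  refine hkθ ⟨i, hi⟩ ?_
  have hfract :
      Int.fract ((k : ℝ) * θ i - (1 + δ) / 2) = Int.fract ((k : ℝ) * θ i) + (1 - δ) / 2 :=
    Int.fract_eq_iff.2 ⟨by linarith, by linarith, ⌊(k : ℝ) * θ i⌋ - 1, by
      rw [Int.cast_sub, Int.cast_one, ← Int.self_sub_fract]; ring⟩
  rw [hfract]
  constructor <;> linarith

/-- Torus-dynamics refinement underlying Theorem 1.1(iii): if for every `k ≥ 1`
some irrational coordinate `θ_i` has `Int.fract (k θ_i) ∈ [0, δ]` with
`δ ∈ (0,1)`, then there is a non-trivial resonance relation supported on the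
irrational coordinates. -/
theorem stmt_15 (m : ℕ) (hm : 1 ≤ m) (θ : Fin m → ℝ) (δ : ℝ)
    (hδ0 : 0 < δ) (hδ1 : δ < 1)
    (h : ∀ k : ℕ, 1 ≤ k →
      ∃ i : Fin m, Irrational (θ i) ∧ Int.fract ((k : ℝ) * θ i) ∈ Set.Icc 0 δ) :
    ∃ a : Fin m → ℤ, a ≠ 0 ∧ (∀ i, ¬Irrational (θ i) → a i = 0) ∧
      ∃ z : ℤ, ∑ i, (a i : ℝ) * θ i = z :=
  stmt_15_general m θ δ hδ1 h
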